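/- There exists N₀ ∈ ℕ, depending only on Q, α and θ, such that for every N ≥ N₀ and every pair (M,A) consisting of a representation M of Q on (V_i) and a family A = (A_i : E_i → V_i)_{i∈Q0⁺}: (M,A) is θ⁺-semi-stable if and only if M is θ-semi-stable and A_i is a linear isomorphism for every i ∈ Q0⁺; and (M,A) is θ⁺-stable if and only if M is θ-stable and A_i is a linear isomorphism for every i ∈ Q0⁺. -/

import Mathlib

/-!
Write the θ⁺-value of a framed subrepresentation `(W,U)` as `N·Σ_{i∈Q0⁺}(dim W_i − dim U_i) + θ(U)`.
Testing against `(ker A, 0)` shows that θ⁺-semi-stability forces every `A_i` to be injective, hence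
bijective, as soon as `N ≥ 1`. For injective `A` one has `dim W_i ≤ dim U_i`, with equality for the
canonical framing `W_i = A_i⁻¹(U_i)` when `A` is bijective; so the framing term is `≤ 0` and vanishes
on the canonical framing, which makes θ⁺-(semi-)stability equivalent to θ-(semi-)stability.
Hence `N₀ = 1` works.
-/

open Module

section

variable {k Q0 Q1 : Type} [Field k] (src tgt : Q1 → Q0)
  (V : Q0 → Type) [∀ i, AddCommGroup (V i)] [∀ i, Module k (V i)]

/-- `U` is a subrepresentation of the representation `M`. -/
def IsSubrep (M : ∀ a : Q1, V (src a) →ₗ[k] V (tgt a))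
    (U : ∀ i : Q0, Submodule k (V i)) : Prop :=
  ∀ a : Q1, ∀ x ∈ U (src a), M a x ∈ U (tgt a)

variable [Fintype Q0]

/-- `M` is θ-semi-stable: `θ((V_i)_i) = 0` and `θ(U) ≤ 0` for every
subrepresentation `U`. -/
def ThetaSemistable (θ : Q0 → ℤ) (M : ∀ a : Q1, V (src a) →ₗ[k] V (tgt a)) : Prop :=
  (∑ i : Q0, θ i * (finrank k (V i) : ℤ)) = 0 ∧
  ∀ U : ∀ i : Q0, Submodule k (V i), IsSubrep src tgt V M U →
    ∑ i : Q0, θ i * (finrank k (U i) : ℤ) ≤ 0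

/-- `M` is θ-stable: θ-semi-stable and `θ(U) < 0` for every subrepresentation `U` other
than `0` and `(V_i)_i`. -/
def ThetaStable (θ : Q0 → ℤ) (M : ∀ a : Q1, V (src a) →ₗ[k] V (tgt a)) : Prop :=
  ThetaSemistable src tgt V θ M ∧
  ∀ U : ∀ i : Q0, Submodule k (V i), IsSubrep src tgt V M U →
    (¬ ∀ i, U i = ⊥) → (¬ ∀ i, U i = ⊤) →
    ∑ i : Q0, θ i * (finrank k (U i) : ℤ) < 0

variable (θ : Q0 → ℤ)
  (E : {i : Q0 // 0 ≤ θ i} → Type) [∀ i, AddCommGroup (E i)] [∀ i, Module k (E i)]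

/-- The θ⁺-value of a framed subrepresentation `(W,U)` for the framing parameter `N`. -/
noncomputable def ThetaPlusVal (N : ℕ) (W : ∀ i : {i : Q0 // 0 ≤ θ i}, Submodule k (E i))
    (U : ∀ i : Q0, Submodule k (V i)) : ℤ :=
  (∑ i : {i : Q0 // 0 ≤ θ i},
      ((N : ℤ) * (finrank k (W i) : ℤ) + (θ i.1 - (N : ℤ)) * (finrank k (U i.1) : ℤ)))
    + ∑ i : {i : Q0 // ¬ 0 ≤ θ i}, θ i.1 * (finrank k (U i.1) : ℤ)

/-- `(M,A)` is θ⁺-semi-stable: every framed subrepresentation `(W,U)` (so `A_i(W_i) ⊆ U_i`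
for `i ∈ Q0⁺`) has θ⁺-value `≤ 0`. -/
def ThetaPlusSemistable (N : ℕ) (M : ∀ a : Q1, V (src a) →ₗ[k] V (tgt a))
    (A : ∀ i : {i : Q0 // 0 ≤ θ i}, E i →ₗ[k] V i.1) : Prop :=
  ∀ (W : ∀ i : {i : Q0 // 0 ≤ θ i}, Submodule k (E i)) (U : ∀ i : Q0, Submodule k (V i)),
    IsSubrep src tgt V M U →
    (∀ i : {i : Q0 // 0 ≤ θ i}, ∀ x ∈ W i, A i x ∈ U i.1) →
    ThetaPlusVal V θ E N W U ≤ 0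

/-- `(M,A)` is θ⁺-stable: every framed subrepresentation other than `(0,0)` and
`((E_i)_i,(V_i)_i)` has θ⁺-value `< 0`. -/
def ThetaPlusStable (N : ℕ) (M : ∀ a : Q1, V (src a) →ₗ[k] V (tgt a))
    (A : ∀ i : {i : Q0 // 0 ≤ θ i}, E i →ₗ[k] V i.1) : Prop :=
  ∀ (W : ∀ i : {i : Q0 // 0 ≤ θ i}, Submodule k (E i)) (U : ∀ i : Q0, Submodule k (V i)),
    IsSubrep src tgt V M U →
    (∀ i : {i : Q0 // 0 ≤ θ i}, ∀ x ∈ W i, A i x ∈ U i.1) →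
    ¬((∀ i, W i = ⊥) ∧ (∀ i, U i = ⊥)) →
    ¬((∀ i, W i = ⊤) ∧ (∀ i, U i = ⊤)) →
    ThetaPlusVal V θ E N W U < 0

end

lemma Submodule.finrank_comap_of_bijective {K M N : Type} [Field K] [AddCommGroup M] [Module K M]
    [AddCommGroup N] [Module K N] (f : M →ₗ[K] N) (hf : Function.Bijective f)
    (p : Submodule K N) :
    finrank K (p.comap f) = finrank K p := by
  let e := LinearEquiv.ofBijective f hf
  change finrank K (p.comap (e : M →ₗ[K] N)) = _
  rw [Submodule.comap_equiv_eq_map_symm, LinearEquiv.finrank_map_eq]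

lemma Submodule.finrank_le_of_map_le {K M N : Type} [Field K] [AddCommGroup M] [Module K M]
    [AddCommGroup N] [Module K N] [FiniteDimensional K N] (f : M →ₗ[K] N)
    (hf : Function.Injective f) {p : Submodule K M} {q : Submodule K N} (h : p.map f ≤ q) :
    finrank K p ≤ finrank K q :=
  (LinearEquiv.finrank_eq (Submodule.equivMapOfInjective f hf p)).trans_le
    (Submodule.finrank_mono h)

section Framed

variable {k Q0 Q1 : Type} [Field k] {src tgt : Q1 → Q0}
  {V : Q0 → Type} [∀ i, AddCommGroup (V i)] [∀ i, Module k (V i)]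
  {θ : Q0 → ℤ}
  {E : {i : Q0 // 0 ≤ θ i} → Type} [∀ i, AddCommGroup (E i)] [∀ i, Module k (E i)]

lemma isSubrep_bot (M : ∀ a : Q1, V (src a) →ₗ[k] V (tgt a)) :
    IsSubrep src tgt V M (fun _ => ⊥) := by
  intro a x hx
  rw [Submodule.mem_bot] at hx ⊢
  rw [hx, map_zero]

lemma finrank_le_of_framed [∀ i, FiniteDimensional k (V i)]
    {A : ∀ i : {i : Q0 // 0 ≤ θ i}, E i →ₗ[k] V i.1}
    (hA : ∀ i, Function.Injective (A i)) {W : ∀ i : {i : Q0 // 0 ≤ θ i}, Submodule k (E i)}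
    {U : ∀ i : Q0, Submodule k (V i)} (hWU : ∀ i, ∀ x ∈ W i, A i x ∈ U i.1) (i) :
    finrank k (W i) ≤ finrank k (U i.1) :=
  Submodule.finrank_le_of_map_le (A i) (hA i) (Submodule.map_le_iff_le_comap.mpr (hWU i))

variable [Fintype Q0]

variable (V θ E) in
noncomputable def framingDefect (W : ∀ i : {i : Q0 // 0 ≤ θ i}, Submodule k (E i))
    (U : ∀ i : Q0, Submodule k (V i)) : ℤ :=
  ∑ i : {i : Q0 // 0 ≤ θ i}, ((finrank k (W i) : ℤ) - (finrank k (U i.1) : ℤ))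

lemma thetaPlusVal_eq (N : ℕ) (W : ∀ i : {i : Q0 // 0 ≤ θ i}, Submodule k (E i))
    (U : ∀ i : Q0, Submodule k (V i)) :
    ThetaPlusVal V θ E N W U =
      N * framingDefect V θ E W U + ∑ i : Q0, θ i * (finrank k (U i) : ℤ) := by
  classical
  rw [← Fintype.sum_subtype_add_sum_subtype (fun i => 0 ≤ θ i)
      (fun i => θ i * (finrank k (U i) : ℤ)), framingDefect, Finset.mul_sum, ← add_assoc,
    ← Finset.sum_add_distrib]
  exact congrArg (· + _) (Finset.sum_congr rfl fun i _ => by ring)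

lemma thetaPlusVal_bot (N : ℕ) :
    ThetaPlusVal V θ E N (fun _ => (⊥ : Submodule k _)) (fun _ => ⊥) = 0 := by
  simp [thetaPlusVal_eq, framingDefect]

lemma thetaPlusVal_top (N : ℕ) (hθ : ∑ i : Q0, θ i * (finrank k (V i) : ℤ) = 0)
    (hE : ∀ i : {i : Q0 // 0 ≤ θ i}, finrank k (E i) = finrank k (V i.1)) :
    ThetaPlusVal V θ E N (fun _ => (⊤ : Submodule k _)) (fun _ => ⊤) = 0 := by
  simp [thetaPlusVal_eq, framingDefect, hE, hθ]

lemma framingDefect_comap {A : ∀ i : {i : Q0 // 0 ≤ θ i}, E i →ₗ[k] V i.1}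
    (hA : ∀ i, Function.Bijective (A i)) (U : ∀ i : Q0, Submodule k (V i)) :
    framingDefect V θ E (fun i => (U i.1).comap (A i)) U = 0 :=
  Finset.sum_eq_zero fun i _ => by
    rw [Submodule.finrank_comap_of_bijective (A i) (hA i), sub_self]

variable [∀ i, FiniteDimensional k (V i)]

lemma framingDefect_nonpos {A : ∀ i : {i : Q0 // 0 ≤ θ i}, E i →ₗ[k] V i.1}
    (hA : ∀ i, Function.Injective (A i)) {W : ∀ i : {i : Q0 // 0 ≤ θ i}, Submodule k (E i)}
    {U : ∀ i : Q0, Submodule k (V i)} (hWU : ∀ i, ∀ x ∈ W i, A i x ∈ U i.1) :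
    framingDefect V θ E W U ≤ 0 :=
  Finset.sum_nonpos fun i _ => sub_nonpos.mpr (by exact_mod_cast finrank_le_of_framed hA hWU i)

variable [∀ i, FiniteDimensional k (E i)]

lemma framingDefect_neg_of_ne_top {A : ∀ i : {i : Q0 // 0 ≤ θ i}, E i →ₗ[k] V i.1}
    (hA : ∀ i, Function.Injective (A i))
    (hE : ∀ i : {i : Q0 // 0 ≤ θ i}, finrank k (E i) = finrank k (V i.1))
    {W : ∀ i : {i : Q0 // 0 ≤ θ i}, Submodule k (E i)} {U : ∀ i : Q0, Submodule k (V i)}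
    (hWU : ∀ i, ∀ x ∈ W i, A i x ∈ U i.1) (hU : ∀ i, U i = ⊤) (hW : ¬ ∀ i, W i = ⊤) :
    framingDefect V θ E W U < 0 := by
  obtain ⟨j, hj⟩ := not_forall.mp hW
  have hlt : finrank k (W j) < finrank k (U j.1) := by
    rw [hU, finrank_top, ← hE]
    exact Submodule.finrank_lt hj
  exact Finset.sum_neg'
    (fun i _ => sub_nonpos.mpr (by exact_mod_cast finrank_le_of_framed hA hWU i))
    ⟨j, Finset.mem_univ j, sub_neg.mpr (by exact_mod_cast hlt)⟩

end Framed

section Stability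

variable {k Q0 Q1 : Type} [Field k] [Fintype Q0] {src tgt : Q1 → Q0}
  {V : Q0 → Type} [∀ i, AddCommGroup (V i)] [∀ i, Module k (V i)] {θ : Q0 → ℤ}
  {E : {i : Q0 // 0 ≤ θ i} → Type} [∀ i, AddCommGroup (E i)] [∀ i, Module k (E i)]
  {N : ℕ} {M : ∀ a : Q1, V (src a) →ₗ[k] V (tgt a)}
  {A : ∀ i : {i : Q0 // 0 ≤ θ i}, E i →ₗ[k] V i.1}

lemma ThetaPlusStable.thetaPlusSemistable (hθ : ∑ i : Q0, θ i * (finrank k (V i) : ℤ) = 0)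
    (hE : ∀ i : {i : Q0 // 0 ≤ θ i}, finrank k (E i) = finrank k (V i.1))
    (h : ThetaPlusStable src tgt V θ E N M A) : ThetaPlusSemistable src tgt V θ E N M A := by
  intro W U hU hWU
  by_cases hbot : (∀ i, W i = ⊥) ∧ ∀ i, U i = ⊥
  · rw [funext hbot.1, funext hbot.2, thetaPlusVal_bot]
  by_cases htop : (∀ i, W i = ⊤) ∧ ∀ i, U i = ⊤
  · rw [funext htop.1, funext htop.2, thetaPlusVal_top N hθ hE]
  exact (h W U hU hWU hbot htop).le

lemma ThetaPlusSemistable.thetaSemistable (hθ : ∑ i : Q0, θ i * (finrank k (V i) : ℤ) = 0)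
    (h : ThetaPlusSemistable src tgt V θ E N M A) (hA : ∀ i, Function.Bijective (A i)) :
    ThetaSemistable src tgt V θ M :=
  ⟨hθ, fun U hU => by
    simpa [thetaPlusVal_eq, framingDefect_comap hA] using
      h (fun i => (U i.1).comap (A i)) U hU fun _ _ hx => hx⟩

variable [∀ i, FiniteDimensional k (V i)]

lemma ThetaSemistable.thetaPlusSemistable (h : ThetaSemistable src tgt V θ M)
    (hA : ∀ i, Function.Injective (A i)) : ThetaPlusSemistable src tgt V θ E N M A := by
  intro W U hU hWU
  rw [thetaPlusVal_eq]
  exact add_nonpos (mul_nonpos_of_nonneg_of_nonpos N.cast_nonneg (framingDefect_nonpos hA hWU))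
    (h.2 U hU)

variable [∀ i, FiniteDimensional k (E i)]

lemma ThetaPlusSemistable.bijective (hN : 0 < N)
    (hE : ∀ i : {i : Q0 // 0 ≤ θ i}, finrank k (E i) = finrank k (V i.1))
    (h : ThetaPlusSemistable src tgt V θ E N M A) (i) : Function.Bijective (A i) := by
  have hker := h (fun j => LinearMap.ker (A j)) (fun _ => ⊥) (isSubrep_bot M)
    (fun j x hx => (Submodule.mem_bot k).mpr hx)
  simp only [thetaPlusVal_eq, framingDefect, finrank_bot, Nat.cast_zero, sub_zero, mul_zero,
    Finset.sum_const_zero, add_zero] at hker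
  have hsum := nonpos_of_mul_nonpos_right hker (by exact_mod_cast hN)
  have hi := (Finset.sum_eq_zero_iff_of_nonneg fun j _ => by positivity).mp
    (le_antisymm hsum (by positivity)) i (Finset.mem_univ i)
  have hinj : Function.Injective (A i) :=
    LinearMap.ker_eq_bot.mp (Submodule.finrank_eq_zero.mp (by exact_mod_cast hi))
  exact ⟨hinj, (LinearMap.injective_iff_surjective_of_finrank_eq_finrank (hE i)).mp hinj⟩

lemma ThetaPlusStable.thetaStable (hN : 0 < N) (hθ : ∑ i : Q0, θ i * (finrank k (V i) : ℤ) = 0)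
    (hE : ∀ i : {i : Q0 // 0 ≤ θ i}, finrank k (E i) = finrank k (V i.1))
    (h : ThetaPlusStable src tgt V θ E N M A) :
    ThetaStable src tgt V θ M ∧ ∀ i, Function.Bijective (A i) := by
  have hss := h.thetaPlusSemistable hθ hE
  have hA := hss.bijective hN hE
  refine ⟨⟨hss.thetaSemistable hθ hA, fun U hU hUbot hUtop => ?_⟩, hA⟩
  simpa [thetaPlusVal_eq, framingDefect_comap hA] using
    h (fun i => (U i.1).comap (A i)) U hU (fun _ _ hx => hx) (fun h => hUbot h.2)
      (fun h => hUtop h.2)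

lemma ThetaStable.thetaPlusStable (hN : 0 < N)
    (hE : ∀ i : {i : Q0 // 0 ≤ θ i}, finrank k (E i) = finrank k (V i.1))
    (h : ThetaStable src tgt V θ M) (hA : ∀ i, Function.Bijective (A i)) :
    ThetaPlusStable src tgt V θ E N M A := by
  intro W U hU hWU hbot htop
  have hinj i := (hA i).injective
  rw [thetaPlusVal_eq]
  by_cases hUbot : ∀ i, U i = ⊥
  · refine absurd ⟨fun j => ?_, hUbot⟩ hbot
    refine (Submodule.eq_bot_iff _).mpr fun x hx => hinj j ?_
    simpa [hUbot j.1] using hWU j x hx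
  by_cases hUtop : ∀ i, U i = ⊤
  · have hdef := framingDefect_neg_of_ne_top hinj hE hWU hUtop fun hW => htop ⟨hW, hUtop⟩
    obtain rfl : U = fun _ => ⊤ := funext hUtop
    simp only [finrank_top, h.1.1, add_zero]
    exact mul_neg_of_pos_of_neg (by exact_mod_cast hN) hdef
  exact add_neg_of_nonpos_of_neg
    (mul_nonpos_of_nonneg_of_nonpos N.cast_nonneg (framingDefect_nonpos hinj hWU))
    (h.2 U hU hUbot hUtop)

end Stability

theorem statement8_general {k Q0 Q1 : Type} [Field k] [Fintype Q0]
    (src tgt : Q1 → Q0)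
    (V : Q0 → Type) [∀ i, AddCommGroup (V i)] [∀ i, Module k (V i)]
    [∀ i, FiniteDimensional k (V i)]
    (θ : Q0 → ℤ)
    (hθ : ∑ i : Q0, θ i * (finrank k (V i) : ℤ) = 0)
    (E : {i : Q0 // 0 ≤ θ i} → Type) [∀ i, AddCommGroup (E i)] [∀ i, Module k (E i)]
    [∀ i, FiniteDimensional k (E i)]
    (hE : ∀ i : {i : Q0 // 0 ≤ θ i}, finrank k (E i) = finrank k (V i.1)) :
    ∃ N₀ : ℕ, ∀ N : ℕ, N₀ ≤ N →
      ∀ (M : ∀ a : Q1, V (src a) →ₗ[k] V (tgt a))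
        (A : ∀ i : {i : Q0 // 0 ≤ θ i}, E i →ₗ[k] V i.1),
        (ThetaPlusSemistable src tgt V θ E N M A ↔
          (ThetaSemistable src tgt V θ M ∧ ∀ i, Function.Bijective (A i))) ∧
        (ThetaPlusStable src tgt V θ E N M A ↔
          (ThetaStable src tgt V θ M ∧ ∀ i, Function.Bijective (A i))) := by
  refine ⟨1, fun N hN M A => ⟨⟨fun h => ?_, fun ⟨hM, hA⟩ => ?_⟩,
    ⟨(·.thetaStable hN hθ hE), fun ⟨hM, hA⟩ => hM.thetaPlusStable hN hE hA⟩⟩⟩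
  · have hA := h.bijective hN hE
    exact ⟨h.thetaSemistable hθ hA, hA⟩
  · exact hM.thetaPlusSemistable fun i => (hA i).injective

/-- For `N ≫ 0`: `(M,A)` is θ⁺-(semi-)stable if and only if `M` is θ-(semi-)stable and
all `A_i`, `i ∈ Q0⁺`, are isomorphisms. -/
theorem statement8 {k Q0 Q1 : Type} [Field k] [Fintype Q0] [Fintype Q1]
    (src tgt : Q1 → Q0)
    (V : Q0 → Type) [∀ i, AddCommGroup (V i)] [∀ i, Module k (V i)]
    [∀ i, FiniteDimensional k (V i)]
    (θ : Q0 → ℤ)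
    (hθ : ∑ i : Q0, θ i * (finrank k (V i) : ℤ) = 0)
    (E : {i : Q0 // 0 ≤ θ i} → Type) [∀ i, AddCommGroup (E i)] [∀ i, Module k (E i)]
    [∀ i, FiniteDimensional k (E i)]
    (hE : ∀ i : {i : Q0 // 0 ≤ θ i}, finrank k (E i) = finrank k (V i.1)) :
    ∃ N₀ : ℕ, ∀ N : ℕ, N₀ ≤ N →
      ∀ (M : ∀ a : Q1, V (src a) →ₗ[k] V (tgt a))
        (A : ∀ i : {i : Q0 // 0 ≤ θ i}, E i →ₗ[k] V i.1),
        (ThetaPlusSemistable src tgt V θ E N M A ↔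
          (ThetaSemistable src tgt V θ M ∧ ∀ i, Function.Bijective (A i))) ∧
        (ThetaPlusStable src tgt V θ E N M A ↔
          (ThetaStable src tgt V θ M ∧ ∀ i, Function.Bijective (A i))) :=
  statement8_general src tgt V θ hθ E hE
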